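/- The common limit of the AGM iteration started from a_0 = 1, b_0 = √(1-r²), with r ∈ (0,1), equals π/(2K(r)), where K(r) = (π/2)·F(1/2, 1/2; 1; r²) is the complete elliptic integral of the first kind. -/

import Mathlib

/-- The shifted factorial (Appell symbol) `(a)ₙ = a (a+1) ⋯ (a+n-1)`. -/
noncomputable def poch (a : ℝ) (n : ℕ) : ℝ := ∏ i ∈ Finset.range n, (a + i)

/-- The Gaussian hypergeometric function `F(a,b;c;x)` as a power series. -/
noncomputable def hypF (a b c x : ℝ) : ℝ :=
  ∑' n : ℕ, poch a n * poch b n / (poch c n * (n.factorial : ℝ)) * x ^ n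

/-- The complete elliptic integral of the first kind. -/
noncomputable def ellK (r : ℝ) : ℝ := (Real.pi / 2) * hypF (1/2) (1/2) 1 (r^2)

/-!
Gauss' integral `J(p, q) = ∫ dt / √((t² + p²)(t² + q²))` over `ℝ` is unchanged when `(p, q)` is
replaced by its arithmetic and geometric means: on `(0, ∞)` the substitution `t ↦ (t - pq/t)/2`
carries one integrand to the other. Since `π / max p q ≤ J(p, q) ≤ π / min p q`, running the AGM
squeezes `J(a₀, b₀)` between two quantities tending to `π / L`, so `L = π / J(a₀, b₀)`.
Substituting `t = tan θ` turns `J(1, √(1 - r²))` into `∫ dθ / √(1 - r² cos² θ)` over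
`(-π/2, π/2)`; expanding the integrand by the binomial series and integrating term by term with
Wallis' formula gives `π F(1/2, 1/2; 1; r²) = 2 K(r)`.
-/

open MeasureTheory Real Set Filter Finset
open scoped Nat Topology

noncomputable def gaussIntegral (p q : ℝ) : ℝ := ∫ t : ℝ, (√((t^2 + p^2) * (t^2 + q^2)))⁻¹

lemma abs_mul_inv_sqrt_sq_mul {c : ℝ} (hc : c ≠ 0) (x : ℝ) : |c| * (√(c^2 * x))⁻¹ = (√x)⁻¹ := by
  rw [sqrt_mul (sq_nonneg c), sqrt_sq_eq_abs, mul_inv, ← mul_assoc,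
    mul_inv_cancel₀ (abs_ne_zero.mpr hc), one_mul]

theorem gaussIntegral_eq_integral_inv_sqrt_sin_cos {p : ℝ} (hp : 0 < p) (q : ℝ) :
    gaussIntegral p q =
      ∫ θ in Ioo (-(π/2)) (π/2), (√(p^2 * sin θ ^ 2 + q^2 * cos θ ^ 2))⁻¹ := by
  have himage : (fun θ => p * tan θ) '' Ioo (-(π/2)) (π/2) = univ := by
    rw [← image_image (p * ·) tan, image_tan_Ioo,
      image_univ_of_surjective (mul_left_surjective₀ hp.ne')]
  have hderiv : ∀ θ ∈ Ioo (-(π/2)) (π/2),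
      HasDerivWithinAt (fun θ => p * tan θ) (p / cos θ ^ 2) (Ioo (-(π/2)) (π/2)) θ := by
    intro θ hθ
    exact (((hasDerivAt_tan (cos_pos_of_mem_Ioo hθ).ne').const_mul p).congr_deriv
      (mul_one_div p _)).hasDerivWithinAt
  have hinj : InjOn (fun θ => p * tan θ) (Ioo (-(π/2)) (π/2)) :=
    (mul_right_injective₀ hp.ne').comp_injOn injOn_tan
  rw [gaussIntegral, ← setIntegral_univ, ← himage,
    integral_image_eq_integral_abs_deriv_smul measurableSet_Ioo hderiv hinj]
  refine setIntegral_congr_fun measurableSet_Ioo fun θ hθ => ?_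
  have hcos : cos θ ≠ 0 := (cos_pos_of_mem_Ioo hθ).ne'
  have hkey : ((p * tan θ)^2 + p^2) * ((p * tan θ)^2 + q^2)
      = (p / cos θ ^ 2)^2 * (p^2 * sin θ ^ 2 + q^2 * cos θ ^ 2) := by
    rw [tan_eq_sin_div_cos]
    field_simp
    linear_combination (p^2 * sin θ ^ 2 + q^2 * cos θ ^ 2) * sin_sq_add_cos_sq θ
  rw [smul_eq_mul, hkey, abs_mul_inv_sqrt_sq_mul (by positivity)]

lemma gaussIntegral_eq_two_mul_integral_Ioi (p q : ℝ) :
    gaussIntegral p q = 2 * ∫ t in Ioi 0, (√((t^2 + p^2) * (t^2 + q^2)))⁻¹ := by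
  simp_rw [gaussIntegral, ← integral_comp_abs (f := fun t => (√((t^2 + p^2) * (t^2 + q^2)))⁻¹),
    sq_abs]

theorem gaussIntegral_am_gm {p q : ℝ} (hp : 0 < p) (hq : 0 < q) :
    gaussIntegral ((p + q) / 2) √(p * q) = gaussIntegral p q := by
  have hpq : 0 < p * q := mul_pos hp hq
  set f : ℝ → ℝ := fun t => (t - p * q / t) / 2 with hf
  have hderiv : ∀ t ∈ Ioi (0:ℝ),
      HasDerivWithinAt f ((t^2 + p * q) / (2 * t^2)) (Ioi 0) t := by
    intro t (ht : 0 < t)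
    refine ((((hasDerivAt_id t).sub ((hasDerivAt_inv ht.ne').const_mul (p * q))).div_const 2
      ).congr_deriv ?_).hasDerivWithinAt
    field_simp
    ring
  have hmono : StrictMonoOn f (Ioi 0) := by
    intro s (hs : 0 < s) t (ht : 0 < t) hst
    have : p * q / t < p * q / s := div_lt_div_of_pos_left hpq hs hst
    simp only [hf]
    linarith
  have himage : f '' Ioi 0 = univ := by
    refine eq_univ_of_forall fun u => ?_
    have hs : (√(u^2 + p * q))^2 = u^2 + p * q := sq_sqrt (by positivity)
    have hu : |u| < √(u^2 + p * q) := by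
      rw [← sqrt_sq_eq_abs]
      exact sqrt_lt_sqrt (sq_nonneg u) (by linarith)
    have ht : 0 < u + √(u^2 + p * q) := by linarith [neg_abs_le u]
    refine ⟨u + √(u^2 + p * q), ht, ?_⟩
    simp only [hf]
    rw [show p * q / (u + √(u^2 + p * q)) = √(u^2 + p * q) - u by
      rw [div_eq_iff ht.ne']; linear_combination -hs]
    ring
  rw [gaussIntegral_eq_two_mul_integral_Ioi p q, gaussIntegral, ← setIntegral_univ, ← himage,
    integral_image_eq_integral_abs_deriv_smul measurableSet_Ioi hderiv hmono.injOn,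
    ← integral_const_mul]
  refine setIntegral_congr_fun measurableSet_Ioi fun t (ht : 0 < t) => ?_
  have hkey : (f t ^ 2 + ((p + q) / 2)^2) * (f t ^ 2 + √(p * q) ^ 2)
      = ((t^2 + p * q) / (4 * t^2))^2 * ((t^2 + p^2) * (t^2 + q^2)) := by
    rw [sq_sqrt hpq.le, hf]
    field_simp
    ring
  rw [smul_eq_mul, hkey, show (t^2 + p * q) / (2 * t^2) = 2 * ((t^2 + p * q) / (4 * t^2)) by ring,
    abs_mul, abs_two, mul_assoc, abs_mul_inv_sqrt_sq_mul (by positivity)]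

lemma integrable_inv_sq_add_sq {m : ℝ} (hm : m ≠ 0) : Integrable fun t : ℝ => (t^2 + m^2)⁻¹ := by
  have h := (integrable_inv_one_add_sq.comp_mul_left' (inv_ne_zero hm)).const_mul (m⁻¹ ^ 2)
  refine h.congr (ae_of_all _ fun t => ?_)
  field_simp
  ring

lemma integral_univ_inv_sq_add_sq {m : ℝ} (hm : 0 < m) : ∫ t : ℝ, (t^2 + m^2)⁻¹ = π / m := by
  have h : ∀ t : ℝ, (t^2 + m^2)⁻¹ = m⁻¹ ^ 2 * (1 + (m⁻¹ * t)^2)⁻¹ := fun t => by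
    field_simp
    ring
  simp_rw [h]
  rw [integral_const_mul, Measure.integral_comp_mul_left (fun y => (1 + y^2)⁻¹) m⁻¹,
    integral_univ_inv_one_add_sq, smul_eq_mul, inv_inv, abs_of_pos hm]
  field_simp

lemma sq_add_min_sq_le_sqrt_mul {p q : ℝ} (hp : 0 ≤ p) (hq : 0 ≤ q) (t : ℝ) :
    t^2 + min p q ^ 2 ≤ √((t^2 + p^2) * (t^2 + q^2)) := by
  have hm : 0 ≤ min p q := le_min hp hq
  rw [le_sqrt (by positivity) (by positivity), sq (t^2 + _)]
  gcongr
  exacts [min_le_left p q, min_le_right p q]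

lemma sqrt_mul_le_sq_add_max_sq {p q : ℝ} (hp : 0 ≤ p) (hq : 0 ≤ q) (t : ℝ) :
    √((t^2 + p^2) * (t^2 + q^2)) ≤ t^2 + max p q ^ 2 := by
  rw [sqrt_le_left (by positivity), sq (t^2 + _)]
  gcongr
  exacts [le_max_left p q, le_max_right p q]

lemma integrable_gaussIntegrand {p q : ℝ} (hp : 0 < p) (hq : 0 < q) :
    Integrable fun t : ℝ => (√((t^2 + p^2) * (t^2 + q^2)))⁻¹ := by
  refine (integrable_inv_sq_add_sq (lt_min hp hq).ne').mono' (by fun_prop) (ae_of_all _ fun t => ?_)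
  have h := sq_add_min_sq_le_sqrt_mul hp.le hq.le t
  rw [Real.norm_of_nonneg (by positivity)]
  exact inv_anti₀ (by have := lt_min hp hq; positivity) h

lemma pi_div_max_le_gaussIntegral {p q : ℝ} (hp : 0 < p) (hq : 0 < q) :
    π / max p q ≤ gaussIntegral p q := by
  have hM : 0 < max p q := lt_max_of_lt_left hp
  rw [← integral_univ_inv_sq_add_sq hM]
  refine integral_mono (integrable_inv_sq_add_sq hM.ne') (integrable_gaussIntegrand hp hq)
    fun t => inv_anti₀ ?_ (sqrt_mul_le_sq_add_max_sq hp.le hq.le t)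
  exact sqrt_pos.2 (by positivity)

lemma gaussIntegral_le_pi_div_min {p q : ℝ} (hp : 0 < p) (hq : 0 < q) :
    gaussIntegral p q ≤ π / min p q := by
  have hm : 0 < min p q := lt_min hp hq
  rw [← integral_univ_inv_sq_add_sq hm]
  exact integral_mono (integrable_gaussIntegrand hp hq) (integrable_inv_sq_add_sq hm.ne')
    fun t => inv_anti₀ (by positivity) (sq_add_min_sq_le_sqrt_mul hp.le hq.le t)

lemma poch_eq_ascPochhammer_eval (a : ℝ) (n : ℕ) : poch a n = (ascPochhammer ℝ n).eval a := by
  induction n with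
  | zero => simp [poch]
  | succ n ih => rw [poch, prod_range_succ, ← poch, ih, ascPochhammer_succ_eval]

lemma poch_one (n : ℕ) : poch 1 n = n ! := by
  rw [poch, ← prod_range_add_one_eq_factorial]
  push_cast
  exact prod_congr rfl fun i _ => add_comm _ _

lemma poch_nonneg {a : ℝ} (ha : 0 ≤ a) (n : ℕ) : 0 ≤ poch a n :=
  prod_nonneg fun i _ => by positivity

lemma multichoose_eq_poch_div_factorial (a : ℝ) (n : ℕ) :
    Ring.multichoose a n = poch a n / n ! := by
  rw [eq_div_iff (by positivity), mul_comm, ← nsmul_eq_mul,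
    Ring.factorial_nsmul_multichoose_eq_ascPochhammer, Polynomial.ascPochhammer_smeval_eq_eval,
    poch_eq_ascPochhammer_eval]

lemma poch_half_div_factorial (n : ℕ) :
    poch (1/2) n / n ! = ∏ i ∈ range n, (2 * (i : ℝ) + 1) / (2 * i + 2) := by
  rw [poch, ← prod_range_add_one_eq_factorial, Nat.cast_prod, ← prod_div_distrib]
  refine prod_congr rfl fun i _ => ?_
  push_cast
  field_simp
  ring

lemma hasSum_poch_div_factorial_mul_pow (a : ℝ) {x : ℝ} (hx : |x| < 1) :
    HasSum (fun n => poch a n / n ! * x ^ n) (1 / (1 - x) ^ a) := by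
  have h := (one_div_one_sub_rpow_hasFPowerSeriesOnBall_zero a).hasSum
    (y := x) (by simpa [Metric.mem_eball, edist_dist] using hx)
  simp only [FormalMultilinearSeries.ofScalars_apply_eq, zero_add, smul_eq_mul] at h
  simpa only [← Ring.multichoose_eq, multichoose_eq_poch_div_factorial] using h

lemma hasSum_poch_half_div_factorial_mul_pow {x : ℝ} (hx : |x| < 1) :
    HasSum (fun n => poch (1/2) n / n ! * x ^ n) (√(1 - x))⁻¹ := by
  simpa only [← sqrt_eq_rpow, one_div (√_)] using hasSum_poch_div_factorial_mul_pow (1/2) hx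

lemma poch_half_div_factorial_le_one (n : ℕ) : poch (1/2) n / n ! ≤ 1 := by
  rw [poch_half_div_factorial]
  exact prod_le_one (fun i _ => by positivity) fun i _ => by
    rw [div_le_one (by positivity)]; linarith

lemma hypF_half_half_one (x : ℝ) :
    hypF (1/2) (1/2) 1 x = ∑' n : ℕ, (poch (1/2) n / n !) ^ 2 * x ^ n := by
  refine tsum_congr fun n => ?_
  rw [poch_one]
  ring

lemma integral_cos_pow_two_mul (n : ℕ) :
    ∫ θ in Ioo (-(π/2)) (π/2), cos θ ^ (2 * n) = π * (poch (1/2) n / n !) := by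
  rw [← integral_Ioc_eq_integral_Ioo, ← intervalIntegral.integral_of_le (by linarith [pi_pos])]
  simp_rw [← sin_add_pi_div_two]
  rw [intervalIntegral.integral_comp_add_right (fun θ => sin θ ^ (2 * n)), neg_add_cancel,
    add_halves, integral_sin_pow_even, poch_half_div_factorial]

theorem integral_inv_sqrt_one_sub_mul_cos_sq {k : ℝ} (hk : |k| < 1) :
    ∫ θ in Ioo (-(π/2)) (π/2), (√(1 - k * cos θ ^ 2))⁻¹ = π * hypF (1/2) (1/2) 1 k := by
  set c : ℕ → ℝ := fun n => poch (1/2) n / (n ! : ℝ)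
  have hc0 : ∀ n, 0 ≤ c n := fun n => div_nonneg (poch_nonneg (by norm_num) n) (by positivity)
  set F : ℕ → ℝ → ℝ := fun n θ => c n * k ^ n * cos θ ^ (2 * n) with hF
  have hF_sum_eq : ∀ θ, HasSum (fun n => F n θ) (√(1 - k * cos θ ^ 2))⁻¹ := by
    intro θ
    have hx : |k * cos θ ^ 2| < 1 := by
      rw [abs_mul, abs_of_nonneg (sq_nonneg (cos θ))]
      nlinarith [cos_sq_le_one θ, abs_nonneg k]
    convert hasSum_poch_half_div_factorial_mul_pow hx using 2 with n
    rw [mul_pow, ← pow_mul, ← mul_assoc]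
  have hF_int : ∀ n, IntegrableOn (F n) (Ioo (-(π/2)) (π/2)) := fun n =>
    (Continuous.integrableOn_Icc (by fun_prop)).mono_set Ioo_subset_Icc_self
  have hF_norm : ∀ n, ∫ θ in Ioo (-(π/2)) (π/2), ‖F n θ‖ = π * c n * (c n * |k| ^ n) := by
    intro n
    have : ∀ θ, ‖F n θ‖ = c n * |k| ^ n * cos θ ^ (2 * n) := fun θ => by
      rw [norm_mul, norm_mul, norm_pow, Real.norm_of_nonneg (hc0 n),
        Real.norm_of_nonneg (r := cos θ ^ (2 * n)) (by rw [pow_mul]; positivity), Real.norm_eq_abs]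
    simp_rw [this]
    rw [integral_const_mul, integral_cos_pow_two_mul]
    ring
  have hF_sum : Summable fun n => ∫ θ in Ioo (-(π/2)) (π/2), ‖F n θ‖ := by
    have hgeom := (hasSum_poch_half_div_factorial_mul_pow (x := |k|) (by rwa [abs_abs])).summable
    refine Summable.of_nonneg_of_le (fun n => integral_nonneg fun θ => norm_nonneg _)
      (fun n => ?_) (hgeom.mul_left π)
    rw [hF_norm, mul_assoc]
    exact mul_le_mul_of_nonneg_left (mul_le_of_le_one_left (by have := hc0 n; positivity)
      (poch_half_div_factorial_le_one n)) pi_pos.le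
  have h := hasSum_integral_of_summable_integral_norm hF_int hF_sum
  simp_rw [fun θ => (hF_sum_eq θ).tsum_eq] at h
  rw [← h.tsum_eq, hypF_half_half_one, ← tsum_mul_left]
  refine tsum_congr fun n => ?_
  rw [hF, integral_const_mul, integral_cos_pow_two_mul]
  ring

theorem eq_pi_div_gaussIntegral_of_tendsto_agm {a b : ℕ → ℝ} (ha0 : 0 < a 0) (hb0 : 0 < b 0)
    (ha : ∀ n, a (n + 1) = (a n + b n) / 2) (hb : ∀ n, b (n + 1) = √(a n * b n)) {L : ℝ}
    (hLa : Tendsto a atTop (𝓝 L)) (hLb : Tendsto b atTop (𝓝 L)) :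
    L = π / gaussIntegral (a 0) (b 0) := by
  have hpos : ∀ n, 0 < a n ∧ 0 < b n := by
    intro n
    induction n with
    | zero => exact ⟨ha0, hb0⟩
    | succ n ih =>
      rw [ha, hb]
      exact ⟨by linarith [ih.1, ih.2], sqrt_pos.2 (mul_pos ih.1 ih.2)⟩
  set J := gaussIntegral (a 0) (b 0)
  have hJ : ∀ n, gaussIntegral (a n) (b n) = J := by
    intro n
    induction n with
    | zero => rfl
    | succ n ih => rw [ha, hb, gaussIntegral_am_gm (hpos n).1 (hpos n).2, ih]
  have hJpos : 0 < J :=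
    (div_pos pi_pos (lt_max_of_lt_left ha0)).trans_le (pi_div_max_le_gaussIntegral ha0 hb0)
  have hlower : π ≤ J * L := by
    refine ge_of_tendsto (by simpa using (hLa.max hLb).const_mul J)
      (Eventually.of_forall fun n => ?_)
    have h := pi_div_max_le_gaussIntegral (hpos n).1 (hpos n).2
    rwa [hJ, div_le_iff₀ (lt_max_of_lt_left (hpos n).1)] at h
  have hupper : J * L ≤ π := by
    refine le_of_tendsto (by simpa using (hLa.min hLb).const_mul J)
      (Eventually.of_forall fun n => ?_)
    have h := gaussIntegral_le_pi_div_min (hpos n).1 (hpos n).2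
    rwa [hJ, le_div_iff₀ (lt_min (hpos n).1 (hpos n).2)] at h
  rw [eq_div_iff hJpos.ne', mul_comm]
  exact le_antisymm hupper hlower

theorem agm_limit_eq_pi_div_two_K (r : ℝ) (hr : r ∈ Set.Ioo (0:ℝ) 1) (a b : ℕ → ℝ)
    (ha0 : a 0 = 1) (hb0 : b 0 = Real.sqrt (1 - r^2))
    (ha : ∀ n, a (n+1) = (a n + b n) / 2)
    (hb : ∀ n, b (n+1) = Real.sqrt (a n * b n))
    (L : ℝ)
    (hLa : Filter.Tendsto a Filter.atTop (nhds L))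
    (hLb : Filter.Tendsto b Filter.atTop (nhds L)) :
    L = Real.pi / (2 * ellK r) := by
  have hr2 : r^2 < 1 := by nlinarith [hr.1, hr.2]
  have h1r : 0 < 1 - r^2 := by linarith
  have htrig : ∀ θ, 1^2 * sin θ ^ 2 + √(1 - r^2)^2 * cos θ ^ 2 = 1 - r^2 * cos θ ^ 2 := fun θ => by
    rw [sq_sqrt h1r.le]
    linear_combination sin_sq_add_cos_sq θ
  rw [eq_pi_div_gaussIntegral_of_tendsto_agm (ha0 ▸ one_pos) (hb0 ▸ sqrt_pos.2 h1r) ha hb hLa hLb,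
    ha0, hb0, gaussIntegral_eq_integral_inv_sqrt_sin_cos one_pos]
  simp_rw [htrig]
  rw [integral_inv_sqrt_one_sub_mul_cos_sq (by rwa [abs_of_nonneg (sq_nonneg r)]), ellK]
  ring
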